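/- arXiv:2402.12163 — 3 statements merged into one kernel-verified Lean document; each statement's English description precedes it below -/
import Mathlib

section
/- Let A, B, C ∈ ℝ with B > 0, C − B < 0 and C + B > 0, and let ω* = √x* where x* = ((2C − A²) + √((A² − 2C)² − 4(C² − B²)))/2. Then there exists θ* ∈ [0, 2π) with B cos θ* = ω*² − C and B sin θ* = Aω*, and for every natural number k, the delay τ_k = (θ* + 2kπ)/ω* is nonnegative and satisfies Γ(iω*, τ_k) = 0; i.e. the characteristic equation has the purely imaginary root iω* at each of the infinitely many critical delays τ_k. -/
/-- existence of the phase `θ* ∈ [0, 2π)` and of the infinitely many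
critical delays `τ_k = (θ* + 2kπ)/ω*` at which `iω*` is a characteristic root. -/
theorem critical_delays_exist
    (A B C xstar ωstar : ℝ) (hB : 0 < B) (h1 : C - B < 0) (h2 : 0 < C + B)
    (hx : xstar =
      ((2 * C - A ^ 2) + Real.sqrt ((A ^ 2 - 2 * C) ^ 2 - 4 * (C ^ 2 - B ^ 2))) / 2)
    (hω : ωstar = Real.sqrt xstar) :
    ∃ θstar : ℝ, 0 ≤ θstar ∧ θstar < 2 * Real.pi ∧
      B * Real.cos θstar = ωstar ^ 2 - C ∧
      B * Real.sin θstar = A * ωstar ∧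
      ∀ k : ℕ,
        0 ≤ (θstar + 2 * (k : ℝ) * Real.pi) / ωstar ∧
        (Complex.I * (ωstar : ℂ)) ^ 2 + (A : ℂ) * (Complex.I * (ωstar : ℂ))
            + (B : ℂ) * Complex.exp (-(Complex.I * (ωstar : ℂ)) *
                (((θstar + 2 * (k : ℝ) * Real.pi) / ωstar : ℝ) : ℂ))
            + (C : ℂ) = 0 := by
  have hD : (0:ℝ) < (A ^ 2 - 2 * C) ^ 2 - 4 * (C ^ 2 - B ^ 2) := by nlinarith
  have hS : Real.sqrt ((A ^ 2 - 2 * C) ^ 2 - 4 * (C ^ 2 - B ^ 2)) ^ 2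
      = (A ^ 2 - 2 * C) ^ 2 - 4 * (C ^ 2 - B ^ 2) := Real.sq_sqrt hD.le
  have hSgt : |A ^ 2 - 2 * C| < Real.sqrt ((A ^ 2 - 2 * C) ^ 2 - 4 * (C ^ 2 - B ^ 2)) := by
    have h := Real.sqrt_lt_sqrt (sq_nonneg (A ^ 2 - 2 * C))
      (show (A ^ 2 - 2 * C) ^ 2 < (A ^ 2 - 2 * C) ^ 2 - 4 * (C ^ 2 - B ^ 2) by nlinarith)
    rwa [Real.sqrt_sq_eq_abs] at h
  have hxpos : 0 < xstar := by
    rw [hx]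
    have h := le_abs_self (A ^ 2 - 2 * C)
    linarith
  have hω2 : ωstar ^ 2 = xstar := by rw [hω]; exact Real.sq_sqrt hxpos.le
  have hωpos : 0 < ωstar := by rw [hω]; exact Real.sqrt_pos.mpr hxpos
  have hkey : (ωstar ^ 2 - C) ^ 2 + (A * ωstar) ^ 2 = B ^ 2 := by
    rw [hω2]
    have : A ^ 2 * xstar = (A * ωstar) ^ 2 := by rw [mul_pow, hω2]
    nlinarith [hS]
  set z : ℂ := ⟨ωstar ^ 2 - C, A * ωstar⟩ with hz
  have habs2 : ‖z‖ ^ 2 = B ^ 2 := by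
    rw [Complex.sq_norm]
    simp only [Complex.normSq_mk, hz]
    nlinarith [hkey]
  have habs : ‖z‖ = B := by
    have h1' : ‖z‖ = Real.sqrt (‖z‖ ^ 2) :=
      (Real.sqrt_sq (norm_nonneg z)).symm
    rw [h1', habs2, Real.sqrt_sq hB.le]
  have hz0 : z ≠ 0 := by
    intro h
    rw [h] at habs
    simp at habs
    exact absurd habs hB.ne
  have hre : z.re = ωstar ^ 2 - C := rfl
  have him : z.im = A * ωstar := rfl
  set θ : ℝ := if 0 ≤ z.arg then z.arg else z.arg + 2 * Real.pi with hθ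
  have hcosθ : Real.cos θ = Real.cos z.arg := by
    rw [hθ]; split
    · rfl
    · rw [Real.cos_add_two_pi]
  have hsinθ : Real.sin θ = Real.sin z.arg := by
    rw [hθ]; split
    · rfl
    · rw [Real.sin_add_two_pi]
  have hθ0 : 0 ≤ θ := by
    rw [hθ]; split
    · assumption
    · have := Complex.neg_pi_lt_arg z
      have := Real.pi_pos
      linarith
  have hθlt : θ < 2 * Real.pi := by
    rw [hθ]; split
    · have := Complex.arg_le_pi z
      have := Real.pi_pos
      linarith
    · have : z.arg < 0 := by linarith [not_le.mp (by assumption)]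
      linarith
  have hcos : B * Real.cos θ = ωstar ^ 2 - C := by
    rw [hcosθ, Complex.cos_arg hz0, habs, hre]
    field_simp
  have hsin : B * Real.sin θ = A * ωstar := by
    rw [hsinθ, Complex.sin_arg, habs, him]
    field_simp
  refine ⟨θ, hθ0, hθlt, hcos, hsin, fun k => ?_⟩
  have hτ : 0 ≤ (θ + 2 * (k : ℝ) * Real.pi) / ωstar := by
    apply div_nonneg _ hωpos.le
    have := Real.pi_pos
    positivity
  refine ⟨hτ, ?_⟩
  set t : ℝ := θ + 2 * (k : ℝ) * Real.pi with ht
  have hexp : Complex.exp (-(Complex.I * (ωstar : ℂ)) * ((t / ωstar : ℝ) : ℂ))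
      = (Real.cos θ : ℂ) - (Real.sin θ : ℂ) * Complex.I := by
    have h1' : -(Complex.I * (ωstar : ℂ)) * ((t / ωstar : ℝ) : ℂ)
        = ((-t : ℝ) : ℂ) * Complex.I := by
      push_cast
      have : (ωstar : ℂ) ≠ 0 := by exact_mod_cast hωpos.ne'
      field_simp
    rw [h1', Complex.exp_mul_I, ← Complex.ofReal_cos, ← Complex.ofReal_sin,
      Real.cos_neg, Real.sin_neg]
    have hct : Real.cos t = Real.cos θ := by
      rw [ht]
      have := Real.cos_add_int_mul_two_pi θ (k : ℤ)
      rw [show θ + 2 * (k : ℝ) * Real.pi = θ + (k : ℤ) * (2 * Real.pi) by push_cast; ring]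
      exact this
    have hst : Real.sin t = Real.sin θ := by
      rw [ht]
      have := Real.sin_add_int_mul_two_pi θ (k : ℤ)
      rw [show θ + 2 * (k : ℝ) * Real.pi = θ + (k : ℤ) * (2 * Real.pi) by push_cast; ring]
      exact this
    rw [hct, hst]
    push_cast
    ring
  rw [hexp]
  have hc' : (B : ℂ) * (Real.cos θ : ℂ) = (ωstar : ℂ) ^ 2 - (C : ℂ) := by
    exact_mod_cast congrArg (fun x : ℝ => (x : ℂ)) hcos
  have hs' : (B : ℂ) * (Real.sin θ : ℂ) = (A : ℂ) * (ωstar : ℂ) := by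
    exact_mod_cast congrArg (fun x : ℝ => (x : ℂ)) hsin
  have hI : Complex.I ^ 2 = -1 := Complex.I_sq
  linear_combination hc' - Complex.I * hs' + ((ωstar : ℂ) ^ 2) * hI
end

section
/- Let A, B, C ∈ ℝ with B ≠ 0, let ω* > 0 with 2ω*² + A² − 2C > 0, and let τ* ≥ 0. Suppose γ : ℝ → ℂ is differentiable at τ* with γ(τ*) = iω*, Γ(γ(τ), τ) = γ(τ)² + Aγ(τ) + B e^{−γ(τ)τ} + C = 0 for all τ in a neighborhood of τ*, and 2γ(τ*) + A − τ* B e^{−γ(τ*)τ*} ≠ 0. Then Re γ′(τ*) > 0; in particular the transversality condition Re γ′(τ*) ≠ 0 holds. -/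
/-- transversality of the branch of characteristic roots crossing
the imaginary axis at `iω*`: `Re γ'(τ*) > 0`. -/
theorem transversality_condition
    (A B C ωstar τstar : ℝ) (hB : B ≠ 0) (hω : 0 < ωstar)
    (hpos : 0 < 2 * ωstar ^ 2 + A ^ 2 - 2 * C) (hτ : 0 ≤ τstar)
    (γ : ℝ → ℂ)
    (hdiff : DifferentiableAt ℝ γ τstar)
    (hval : γ τstar = Complex.I * (ωstar : ℂ))
    (heq : ∀ᶠ τ in nhds τstar,
      γ τ ^ 2 + (A : ℂ) * γ τ + (B : ℂ) * Complex.exp (-(γ τ) * (τ : ℂ)) + (C : ℂ) = 0)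
    (hD : 2 * γ τstar + (A : ℂ)
        - (τstar : ℂ) * (B : ℂ) * Complex.exp (-(γ τstar) * (τstar : ℂ)) ≠ 0) :
    0 < (deriv γ τstar).re := by
  have hγ : HasDerivAt γ (deriv γ τstar) τstar := hdiff.hasDerivAt
  have hid : HasDerivAt (fun τ : ℝ => (τ : ℂ)) 1 τstar := by
    simpa using (hasDerivAt_id' τstar).ofReal_comp
  have hinner : HasDerivAt (fun τ : ℝ => -(γ τ) * (τ : ℂ))
      (-(deriv γ τstar) * (τstar : ℂ) + -(γ τstar) * 1) τstar := (hγ.neg).mul hid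
  have hexp : HasDerivAt (fun τ : ℝ => Complex.exp (-(γ τ) * (τ : ℂ)))
      (Complex.exp (-(γ τstar) * (τstar : ℂ))
        * (-(deriv γ τstar) * (τstar : ℂ) + -(γ τstar) * 1)) τstar := hinner.cexp
  have hF := (((hγ.mul hγ).add (hγ.const_mul (A : ℂ))).add
    (hexp.const_mul (B : ℂ))).add_const (C : ℂ)
  have heq' : ∀ᶠ τ in nhds τstar,
      γ τ * γ τ + (A : ℂ) * γ τ + (B : ℂ) * Complex.exp (-(γ τ) * (τ : ℂ)) + (C : ℂ) = 0 :=
    heq.mono (fun τ h => by rw [← h]; ring)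
  have hF0 : HasDerivAt (fun τ : ℝ =>
      γ τ * γ τ + (A : ℂ) * γ τ + (B : ℂ) * Complex.exp (-(γ τ) * (τ : ℂ)) + (C : ℂ))
      0 τstar := (hasDerivAt_const τstar (0 : ℂ)).congr_of_eventuallyEq heq'
  have hu := hF.unique hF0
  push_cast at hu
  set E : ℂ := (B : ℂ) * Complex.exp (-(γ τstar) * (τstar : ℂ)) with hEdef
  have hgD : deriv γ τstar * (2 * γ τstar + (A : ℂ) - (τstar : ℂ) * E) = γ τstar * E := by
    rw [hEdef]; linear_combination hu
  have hDne : (2 * γ τstar + (A : ℂ) - (τstar : ℂ) * E) ≠ 0 := by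
    intro h
    exact hD (by rw [hEdef] at h; linear_combination h)
  have hgval : deriv γ τstar = γ τstar * E / (2 * γ τstar + (A : ℂ) - (τstar : ℂ) * E) :=
    (eq_div_iff hDne).2 hgD
  have hv := heq.self_of_nhds
  have hEval : E = ((ωstar ^ 2 - C : ℝ) : ℂ) - ((A * ωstar : ℝ) : ℂ) * Complex.I := by
    have h1 : E = -(γ τstar ^ 2 + (A : ℂ) * γ τstar + (C : ℂ)) := by
      rw [hEdef]; linear_combination hv
    rw [h1, hval]
    have hI : (Complex.I : ℂ) ^ 2 = -1 := Complex.I_sq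
    push_cast
    linear_combination (-(ωstar : ℂ) ^ 2) * hI
  rw [hgval, hEval, hval]
  rw [Complex.div_re]
  have hns : 0 < Complex.normSq (2 * (Complex.I * (ωstar : ℂ)) + (A : ℂ)
      - (τstar : ℂ) * (((ωstar ^ 2 - C : ℝ) : ℂ) - ((A * ωstar : ℝ) : ℂ) * Complex.I)) := by
    apply Complex.normSq_pos.2
    rw [← hEval, ← hval]
    exact hDne
  set D : ℂ := 2 * (Complex.I * (ωstar : ℂ)) + (A : ℂ)
      - (τstar : ℂ) * (((ωstar ^ 2 - C : ℝ) : ℂ) - ((A * ωstar : ℝ) : ℂ) * Complex.I) with hDdef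
  rw [← add_div]
  apply div_pos _ hns
  rw [hDdef]
  simp only [Complex.mul_re, Complex.mul_im, Complex.add_re, Complex.add_im,
    Complex.sub_re, Complex.sub_im, Complex.I_re, Complex.I_im,
    Complex.ofReal_re, Complex.ofReal_im, Complex.re_ofNat, Complex.im_ofNat]
  ring_nf
  nlinarith [mul_pos (mul_pos hω hω) hpos]
end

section
/- Let A, B, C ∈ ℝ with A² ≥ 2C and C² ≥ B². Then for every real ω ≠ 0 and every τ ≥ 0, Γ(iω, τ) = (iω)² + A(iω) + B e^{−iωτ} + C ≠ 0; i.e. the characteristic equation has no nonzero purely imaginary roots for any delay. -/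
/-- if `A² ≥ 2C` and `C² ≥ B²`, the characteristic equation has no
nonzero purely imaginary root for any delay `τ ≥ 0`. -/
theorem no_purely_imaginary_roots
    (A B C : ℝ) (hA : A ^ 2 ≥ 2 * C) (hC : C ^ 2 ≥ B ^ 2) :
    ∀ ω : ℝ, ω ≠ 0 → ∀ τ : ℝ, 0 ≤ τ →
      (Complex.I * (ω : ℂ)) ^ 2 + (A : ℂ) * (Complex.I * (ω : ℂ))
          + (B : ℂ) * Complex.exp (-(Complex.I * (ω : ℂ)) * (τ : ℂ)) + (C : ℂ) ≠ 0 := by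
  intro ω hω τ hτ h
  set e := Complex.exp (-(Complex.I * (ω : ℂ)) * (τ : ℂ)) with he
  have hns : Complex.normSq e = 1 := by
    rw [he, Complex.normSq_eq_norm_sq, Complex.norm_exp]
    simp
  have key : (B : ℂ) * e = ((ω ^ 2 - C : ℝ) : ℂ) - ((A * ω : ℝ) : ℂ) * Complex.I := by
    push_cast
    linear_combination h - (ω : ℂ) ^ 2 * Complex.I_sq
  have h2 := congrArg Complex.normSq key
  rw [Complex.normSq_mul, hns] at h2
  simp [Complex.normSq_apply, ← Complex.ofReal_pow] at h2
  have hω2 : ω ^ 2 > 0 := by positivity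
  nlinarith [sq_nonneg (ω^2), sq_nonneg ω, sq_nonneg (A*ω), h2]
end
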